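/- arXiv:2111.13752 — 2 statements merged into one kernel-verified Lean document; each statement's English description precedes it below -/
import Mathlib

section
/- Let (A,(p_l)) be a non-unital Fréchet algebra that is a Montel space, and let n ∈ ℕ. If the unitization A# is 2n-weakly amenable, then A is 2n-weakly amenable. -/
noncomputable section

open Filter Topology

/-- A topological `ℂ`-module `X` equipped with left and right actions of `A`,
each acting by continuous linear maps on `X`.  This is the data underlying a
locally convex `A`-bimodule. -/
structure BiMod (A : Type) : Type 1 where
  X : Type
  [ag : AddCommGroup X]
  [md : Module ℂ X]
  [ts : TopologicalSpace X]
  l : A → X →L[ℂ] X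
  r : A → X →L[ℂ] X

attribute [instance] BiMod.ag BiMod.md BiMod.ts

namespace BiMod

variable {A : Type}

/-- The strong dual of a bimodule, with the canonical dual actions
`⟨a·f, x⟩ = ⟨f, x·a⟩` and `⟨f·a, x⟩ = ⟨f, a·x⟩`.  The dual carries the strong
topology (uniform convergence on von Neumann bounded sets), which is the default
topology on `X →L[ℂ] ℂ` in Mathlib. -/
def dual (M : BiMod A) : BiMod A where
  X := M.X →L[ℂ] ℂ
  l a := ContinuousLinearMap.precomp ℂ (M.r a)
  r a := ContinuousLinearMap.precomp ℂ (M.l a)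

/-- The `n`-th iterated strong dual of a bimodule (`iterDual M 0 = M`). -/
def iterDual (M : BiMod A) : ℕ → BiMod A
  | 0 => M
  | n + 1 => (M.iterDual n).dual

instance dualCSM (M : BiMod A) : ContinuousSMul ℂ (M.dual).X :=
  inferInstanceAs (ContinuousSMul ℂ (M.X →L[ℂ] ℂ))

/-- Evaluation (canonical) embedding of a bimodule into its double dual. -/
def evalEmbed (M : BiMod A) [ContinuousSMul ℂ M.X] (x : M.X) : M.dual.dual.X :=
  show (M.X →L[ℂ] ℂ) →L[ℂ] ℂ from
    ⟨⟨⟨fun f => f x, fun _ _ => rfl⟩, fun _ _ => rfl⟩, continuous_eval_const x⟩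

/-- `ContinuousSMul` holds at every level of the iterated dual. -/
def iterCSM (M : BiMod A) (h : ContinuousSMul ℂ M.X) :
    ∀ n, ContinuousSMul ℂ (M.iterDual n).X
  | 0 => h
  | n + 1 => inferInstanceAs (ContinuousSMul ℂ ((M.iterDual n).X →L[ℂ] ℂ))

/-- The canonical (iterated evaluation) embedding `M → M^(2n)`. -/
def iterEmbed (M : BiMod A) (h : ContinuousSMul ℂ M.X) :
    ∀ n : ℕ, M.X → (M.iterDual (2 * n)).X
  | 0, x => x
  | n + 1, x =>
    haveI := M.iterCSM h (2 * n)
    (M.iterDual (2 * n)).evalEmbed (M.iterEmbed h n x)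

/-- The pairing between the `(k+1)`-st dual and the `k`-th dual. -/
def pairApply (M : BiMod A) (k : ℕ) (F : (M.iterDual (k + 1)).X)
    (x : (M.iterDual k).X) : ℂ := (show (M.iterDual k).X →L[ℂ] ℂ from F) x

end BiMod

section Defs

variable (A : Type) [NonUnitalRing A] [Module ℂ A] [SMulCommClass ℂ A A] [IsScalarTower ℂ A A]
  [TopologicalSpace A] [IsTopologicalAddGroup A] [ContinuousSMul ℂ A] [ContinuousMul A]

/-- A continuous derivation from `A` into a bimodule. -/
def IsContDerivation (M : BiMod A) (D : A →L[ℂ] M.X) : Prop :=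
  ∀ a b : A, D (a * b) = M.l a (D b) + M.r b (D a)

/-- An inner derivation : `D a = a·x - x·a` for some `x`. -/
def IsInnerDerivation (M : BiMod A) (D : A →L[ℂ] M.X) : Prop :=
  ∃ x : M.X, ∀ a : A, D a = M.l a x - M.r a x

/-- `A` as a bimodule over itself, via left/right multiplication. -/
def selfBiMod : BiMod A where
  X := A
  l a := ⟨LinearMap.mulLeft ℂ a, continuous_mul_left a⟩
  r a := ⟨LinearMap.mulRight ℂ a, continuous_mul_right a⟩

/-- `A` is `n`-weakly amenable if every continuous derivation from `A` into the
`n`-th iterated strong dual `A^(n)` (with the canonical module actions) is inner. -/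
def NWeaklyAmenable (n : ℕ) : Prop :=
  ∀ D : A →L[ℂ] ((selfBiMod A).iterDual n).X,
    IsContDerivation A ((selfBiMod A).iterDual n) D →
      IsInnerDerivation A ((selfBiMod A).iterDual n) D

/-- A closed two-sided ideal `I` of `A` (a closed `ℂ`-subalgebra which absorbs
multiplication on both sides) as an `A`-bimodule. -/
def idealBiMod (I : NonUnitalSubalgebra ℂ A)
    (hl : ∀ a : A, ∀ x ∈ I, a * x ∈ I) (hr : ∀ a : A, ∀ x ∈ I, x * a ∈ I) : BiMod A where
  X := ↥I
  l a := ⟨{ toFun := fun x => (⟨a * (x : A), hl a x x.2⟩ : ↥I)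
            map_add' := fun x y => by ext; simp [mul_add]
            map_smul' := fun c x => by ext; simp [mul_smul_comm] },
          (Continuous.subtype_mk ((continuous_mul_left a).comp continuous_subtype_val) _)⟩
  r a := ⟨{ toFun := fun x => (⟨(x : A) * a, hr a x x.2⟩ : ↥I)
            map_add' := fun x y => by ext; simp [add_mul]
            map_smul' := fun c x => by ext; simp [smul_mul_assoc] },
          (Continuous.subtype_mk ((continuous_mul_right a).comp continuous_subtype_val) _)⟩

/-- `A` is `n`-ideally amenable if for every closed two-sided ideal `I` of `A`,
every continuous derivation from `A` into `I^(n)` is inner. -/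
def NIdeallyAmenable (n : ℕ) : Prop :=
  ∀ (I : NonUnitalSubalgebra ℂ A), IsClosed (I : Set A) →
    ∀ (hl : ∀ a : A, ∀ x ∈ I, a * x ∈ I) (hr : ∀ a : A, ∀ x ∈ I, x * a ∈ I),
      ∀ D : A →L[ℂ] ((idealBiMod A I hl hr).iterDual n).X,
        IsContDerivation A ((idealBiMod A I hl hr).iterDual n) D →
          IsInnerDerivation A ((idealBiMod A I hl hr).iterDual n) D

/-- The topology of `A` is generated by an increasing sequence of submultiplicative
seminorms.  Together with completeness and Hausdorffness this says that `A` is a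
Fréchet algebra. -/
def FrechetSeminorms : Prop :=
  ∃ p : SeminormFamily ℂ A ℕ, WithSeminorms p ∧ (∀ n, p n ≤ p (n + 1)) ∧
    ∀ (n : ℕ) (x y : A), p n (x * y) ≤ p n x * p n y

/-- `A` has an identity element. -/
def HasIdentity : Prop := ∃ e : A, ∀ a : A, e * a = a ∧ a * e = a

end Defs

section Montel

variable (E : Type) [AddCommGroup E] [Module ℂ E] [TopologicalSpace E]

/-- A Montel space: a barrelled locally convex Hausdorff space in which every closed
(von Neumann) bounded subset is compact. -/
def IsMontelSpace : Prop :=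
  LocallyConvexSpace ℝ E ∧ T2Space E ∧ BarrelledSpace ℂ E ∧
    ∀ s : Set E, IsClosed s → Bornology.IsVonNBounded ℂ s → IsCompact s

end Montel

section More

variable (A : Type) [NonUnitalRing A] [Module ℂ A] [SMulCommClass ℂ A A] [IsScalarTower ℂ A A]
  [TopologicalSpace A] [IsTopologicalAddGroup A] [ContinuousSMul ℂ A] [ContinuousMul A]

/-- A bounded approximate identity: a bounded net `(e_i)` with `e_i * a → a` and
`a * e_i → a` for every `a`. -/
def HasBoundedApproxIdentity : Prop :=
  ∃ (ι : Type) (_ : Preorder ι) (_ : IsDirected ι (· ≤ ·)) (_ : Nonempty ι) (e : ι → A),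
    Bornology.IsVonNBounded ℂ (Set.range e) ∧
      ∀ a : A, Tendsto (fun i => e i * a) atTop (𝓝 a) ∧
        Tendsto (fun i => a * e i) atTop (𝓝 a)

/-- `A` is essential: the linear span of products is dense. -/
def IsEssential : Prop :=
  Dense ((Submodule.span ℂ {x : A | ∃ a b : A, x = a * b} : Submodule ℂ A) : Set A)

/-- `A` is self-induced: it is essential and every balanced bilinear functional
`φ` (i.e. `φ (a*c) b = φ a (c*b)`) is of the form `φ a b = f (a*b)` for some
continuous linear functional `f`. -/
def SelfInduced : Prop :=
  IsEssential A ∧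
    ∀ φ : A →ₗ[ℂ] A →ₗ[ℂ] ℂ, (∀ a b c : A, φ (a * c) b = φ a (c * b)) →
      ∃ f : A →L[ℂ] ℂ, ∀ a b : A, φ a b = f (a * b)

/-- The data of `M : BiMod A` constitutes a genuine locally convex `A`-bimodule:
the actions satisfy the bimodule laws, are `ℂ`-bilinear, jointly continuous, and
`M.X` is locally convex. -/
structure IsLCBimod (M : BiMod A) : Prop where
  lc : LocallyConvexSpace ℝ M.X
  l_mul : ∀ (a b : A) (x : M.X), M.l (a * b) x = M.l a (M.l b x)
  r_mul : ∀ (a b : A) (x : M.X), M.r (a * b) x = M.r b (M.r a x)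
  l_add : ∀ (a b : A) (x : M.X), M.l (a + b) x = M.l a x + M.l b x
  r_add : ∀ (a b : A) (x : M.X), M.r (a + b) x = M.r a x + M.r b x
  l_smul : ∀ (c : ℂ) (a : A) (x : M.X), M.l (c • a) x = c • M.l a x
  r_smul : ∀ (c : ℂ) (a : A) (x : M.X), M.r (c • a) x = c • M.r a x
  lr_comm : ∀ (a b : A) (x : M.X), M.l a (M.r b x) = M.r b (M.l a x)
  cont_l : Continuous fun q : A × M.X => M.l q.1 q.2
  cont_r : Continuous fun q : A × M.X => M.r q.1 q.2

/-- `A` is amenable: for every locally convex `A`-bimodule `X`, every continuous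
derivation from `A` into the strong dual `X*` (with the canonical dual actions)
is inner. -/
def Amenable : Prop :=
  ∀ M : BiMod A, IsLCBimod A M →
    ∀ D : A →L[ℂ] M.dual.X, IsContDerivation A M.dual D → IsInnerDerivation A M.dual D

end More

section UnitizationInstances

variable (A : Type) [NonUnitalRing A] [Module ℂ A] [SMulCommClass ℂ A A] [IsScalarTower ℂ A A]
  [TopologicalSpace A] [IsTopologicalAddGroup A] [ContinuousSMul ℂ A] [ContinuousMul A]

/-- The unitization `A# = ℂ ⊕ A` carries the product topology, which is the topology
generated by the seminorms `q_l (a, λ) = p_l a + |λ|`. -/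
instance : TopologicalSpace (Unitization ℂ A) :=
  TopologicalSpace.induced Unitization.toProd inferInstance

theorem unitization_continuous_toProd :
    Continuous (Unitization.toProd : Unitization ℂ A → ℂ × A) :=
  continuous_induced_dom

instance : IsTopologicalAddGroup (Unitization ℂ A) where
  continuous_add := continuous_induced_rng.2 <|
    (show Continuous fun p : (ℂ × A) × ℂ × A => p.1 + p.2 by fun_prop).comp
      (((unitization_continuous_toProd A).comp continuous_fst).prodMk
        ((unitization_continuous_toProd A).comp continuous_snd))
  continuous_neg := continuous_induced_rng.2 <|
    (show Continuous fun p : ℂ × A => -p by fun_prop).comp (unitization_continuous_toProd A)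

instance : ContinuousSMul ℂ (Unitization ℂ A) where
  continuous_smul := continuous_induced_rng.2 <|
    (show Continuous fun p : ℂ × (ℂ × A) => p.1 • p.2 by fun_prop).comp
      (continuous_fst.prodMk ((unitization_continuous_toProd A).comp continuous_snd))

instance : ContinuousMul (Unitization ℂ A) where
  continuous_mul := by
    refine continuous_induced_rng.2 ?_
    exact (show Continuous fun p : (ℂ × A) × ℂ × A =>
      ((p.1.1 * p.2.1, p.1.1 • p.2.2 + p.2.1 • p.1.2 + p.1.2 * p.2.2) : ℂ × A)
      by fun_prop).comp
      (((unitization_continuous_toProd A).comp continuous_fst).prodMk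
        ((unitization_continuous_toProd A).comp continuous_snd))

end UnitizationInstances

/-!
Since `A# = A ⊕ ℂ`, the inclusion `A → A#` and the projection `A# → A` exhibit `A` as a
complemented piece of `A#`; their iterated transposes exhibit `A^(2k)` as a complemented piece
of `(A#)^(2k)`. The inclusion intertwines the action of `u ∈ A#` with the action of its
`A`-part plus its scalar part, and commutators with elements of `A` land in its range. So a
derivation `D : A → A^(2n)` extends, through the projection `A# → A`, to a derivation
`A# → (A#)^(2n)`; if that one is implemented by `F`, then `D` is implemented by the projection
of `F`. Taking one dual swaps the roles of inclusion and projection, so the induction along the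
duals alternates between two invariants, `IsUnitizationSection` and `IsUnitizationRetraction`.
-/

namespace BiMod

variable {A B : Type}

/-- `M.dual.X` is `M.X →L[ℂ] ℂ` only after unfolding `dual`; this identification makes the
functionals' coercion to functions available. -/
def toDual (M : BiMod A) : M.dual.X ≃L[ℂ] (M.X →L[ℂ] ℂ) :=
  ContinuousLinearEquiv.refl ℂ (M.X →L[ℂ] ℂ)

@[simp]
theorem toDual_l (M : BiMod A) (a : A) (f : M.dual.X) :
    M.toDual (M.dual.l a f) = (M.toDual f).comp (M.r a) := rfl

@[simp]
theorem toDual_r (M : BiMod A) (a : A) (f : M.dual.X) :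
    M.toDual (M.dual.r a f) = (M.toDual f).comp (M.l a) := rfl

theorem dual_ext (M : BiMod A) {f g : M.dual.X} (h : ∀ x, M.toDual f x = M.toDual g x) :
    f = g :=
  M.toDual.injective (ContinuousLinearMap.ext h)

def dualMap (N : BiMod A) (M : BiMod B) (i : N.X →L[ℂ] M.X) : M.dual.X →L[ℂ] N.dual.X :=
  ContinuousLinearMap.precomp ℂ i

@[simp]
theorem toDual_dualMap (N : BiMod A) (M : BiMod B) (i : N.X →L[ℂ] M.X) (f : M.dual.X) :
    N.toDual (dualMap N M i f) = (M.toDual f).comp i := rfl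

end BiMod

open BiMod Unitization

section UnitizationRetract

variable {A : Type} (N : BiMod A) (M : BiMod (Unitization ℂ A))

structure IsUnitizationSection (i : N.X →L[ℂ] M.X) (p : M.X →L[ℂ] N.X) : Prop where
  left_inv : ∀ x, p (i x) = x
  l_map : ∀ u x, M.l u (i x) = i (N.l u.snd x + u.fst • x)
  r_map : ∀ u x, M.r u (i x) = i (N.r u.snd x + u.fst • x)
  commutator_eq : ∀ (a : A) F,
    M.l (inr a) F - M.r (inr a) F = i (N.l a (p F) - N.r a (p F))

structure IsUnitizationRetraction (p : M.X →L[ℂ] N.X) (s : N.X →L[ℂ] M.X) : Prop where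
  left_inv : ∀ x, p (s x) = x
  map_l : ∀ u f, p (M.l u f) = N.l u.snd (p f) + u.fst • p f
  map_r : ∀ u f, p (M.r u f) = N.r u.snd (p f) + u.fst • p f
  commutator_eq : ∀ (a : A) f,
    M.l (inr a) f - M.r (inr a) f = s (N.l a (p f) - N.r a (p f))

variable {N M}

theorem IsUnitizationSection.dual {i : N.X →L[ℂ] M.X} {p : M.X →L[ℂ] N.X}
    (h : IsUnitizationSection N M i p) :
    IsUnitizationRetraction N.dual M.dual (dualMap N M i) (dualMap M N p) where
  left_inv g := dual_ext _ fun x => by simp [h.left_inv]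
  map_l u f := dual_ext _ fun x => by simp [h.r_map]
  map_r u f := dual_ext _ fun x => by simp [h.l_map]
  commutator_eq a f := dual_ext _ fun x => by
    have hx := congrArg (M.toDual f) (h.commutator_eq a x)
    simp only [map_sub, sub_apply, ContinuousLinearMap.comp_apply,
      toDual_l, toDual_r, toDual_dualMap] at hx ⊢
    linear_combination -hx

theorem IsUnitizationRetraction.dual {p : M.X →L[ℂ] N.X} {s : N.X →L[ℂ] M.X}
    (h : IsUnitizationRetraction N M p s) :
    IsUnitizationSection N.dual M.dual (dualMap M N p) (dualMap N M s) where
  left_inv g := dual_ext _ fun x => by simp [h.left_inv]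
  l_map u f := dual_ext _ fun x => by simp [h.map_r]
  r_map u f := dual_ext _ fun x => by simp [h.map_l]
  commutator_eq a f := dual_ext _ fun x => by
    have hx := congrArg (M.toDual f) (h.commutator_eq a x)
    simp only [map_sub, sub_apply, ContinuousLinearMap.comp_apply,
      toDual_l, toDual_r, toDual_dualMap] at hx ⊢
    linear_combination -hx

theorem IsUnitizationSection.exists_iterDual {i : N.X →L[ℂ] M.X} {p : M.X →L[ℂ] N.X}
    (h : IsUnitizationSection N M i p) (k : ℕ) :
    ∃ i' p', IsUnitizationSection (N.iterDual (2 * k)) (M.iterDual (2 * k)) i' p' := by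
  induction k with
  | zero => exact ⟨i, p, h⟩
  | succ k ih =>
    obtain ⟨i', p', h'⟩ := ih
    exact ⟨_, _, h'.dual.dual⟩

end UnitizationRetract

namespace Unitization

section Algebra

variable {R A : Type} [CommRing R] [NonUnitalRing A] [Module R A]

theorem mul_inr_eq_inr (u : Unitization R A) (x : A) :
    u * inr x = inr (u.snd * x + u.fst • x) :=
  Unitization.ext (by simp) (by simp [snd_mul]; abel)

theorem inr_mul_eq_inr (x : A) (u : Unitization R A) :
    inr x * u = inr (x * u.snd + u.fst • x) :=
  Unitization.ext (by simp) (by simp [snd_mul]; abel)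

theorem inr_mul_sub_mul_inr (a : A) (u : Unitization R A) :
    inr a * u - u * inr a = (inr (a * u.snd - u.snd * a) : Unitization R A) := by
  rw [inr_mul_eq_inr, mul_inr_eq_inr, ← inr_sub, add_sub_add_right_eq_sub]

end Algebra

variable {A : Type} [AddCommMonoid A] [Module ℂ A] [TopologicalSpace A]

def inrCLM : A →L[ℂ] Unitization ℂ A where
  toLinearMap := inrHom ℂ ℂ A
  cont := continuous_induced_rng.2 (continuous_const.prodMk continuous_id)

def sndCLM : Unitization ℂ A →L[ℂ] A where
  toLinearMap := sndHom ℂ ℂ A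
  cont := continuous_snd.comp continuous_induced_dom

@[simp]
theorem sndCLM_apply (u : Unitization ℂ A) : sndCLM u = u.snd := rfl

end Unitization

section Derivations

variable {A : Type} [NonUnitalRing A] [Module ℂ A] [SMulCommClass ℂ A A] [IsScalarTower ℂ A A]
  [TopologicalSpace A]

theorem isUnitizationSection_selfBiMod [IsTopologicalAddGroup A] [ContinuousSMul ℂ A]
    [ContinuousMul A] :
    IsUnitizationSection (selfBiMod A) (selfBiMod (Unitization ℂ A)) (inrCLM (A := A))
      (sndCLM (A := A)) where
  left_inv := snd_inr ℂ
  l_map u (x : A) := mul_inr_eq_inr u x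
  r_map u (x : A) := inr_mul_eq_inr x u
  commutator_eq a F := inr_mul_sub_mul_inr a F

variable {N : BiMod A} {M : BiMod (Unitization ℂ A)} {i : N.X →L[ℂ] M.X} {p : M.X →L[ℂ] N.X}

theorem IsUnitizationSection.isContDerivation_comp_sndCLM (h : IsUnitizationSection N M i p)
    {D : A →L[ℂ] N.X} (hD : IsContDerivation A N D) :
    IsContDerivation (Unitization ℂ A) M ((i.comp D).comp sndCLM) := by
  intro u v
  simp only [ContinuousLinearMap.comp_apply, sndCLM_apply]
  rw [h.l_map, h.r_map, ← map_add, snd_mul]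
  congr 1
  rw [map_add, map_add, map_smul, map_smul, hD]
  abel

theorem IsUnitizationSection.isInnerDerivation_of_comp_sndCLM (h : IsUnitizationSection N M i p)
    {D : A →L[ℂ] N.X}
    (hD : IsInnerDerivation (Unitization ℂ A) M ((i.comp D).comp sndCLM)) :
    IsInnerDerivation A N D := by
  obtain ⟨F, hF⟩ := hD
  refine ⟨p F, fun a => ?_⟩
  have := congrArg p ((hF (inr a)).trans (h.commutator_eq a F))
  simpa [h.left_inv] using this

end Derivations

theorem nWeaklyAmenable_even_of_unitization_general (A : Type) [NonUnitalRing A] [Module ℂ A] [SMulCommClass ℂ A A]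
    [IsScalarTower ℂ A A] [UniformSpace A] [IsUniformAddGroup A] [ContinuousSMul ℂ A]
    [ContinuousMul A] (n : ℕ)
    (h : NWeaklyAmenable (Unitization ℂ A) (2 * n)) : NWeaklyAmenable A (2 * n) := by
  obtain ⟨i, p, hip⟩ := (isUnitizationSection_selfBiMod (A := A)).exists_iterDual n
  intro D hD
  exact hip.isInnerDerivation_of_comp_sndCLM (h _ (hip.isContDerivation_comp_sndCLM hD))

/-- If the unitization `A#` of a non-unital Montel Fréchet algebra `A` is
`2n`-weakly amenable, then `A` is `2n`-weakly amenable. -/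
theorem nWeaklyAmenable_even_of_unitization (A : Type) [NonUnitalRing A] [Module ℂ A] [SMulCommClass ℂ A A]
    [IsScalarTower ℂ A A] [UniformSpace A] [IsUniformAddGroup A] [ContinuousSMul ℂ A]
    [ContinuousMul A] [CompleteSpace A] [T2Space A] (hA : FrechetSeminorms A)
    (hnu : ¬ HasIdentity A) (hMontel : IsMontelSpace A) (n : ℕ)
    (h : NWeaklyAmenable (Unitization ℂ A) (2 * n)) : NWeaklyAmenable A (2 * n) :=
  nWeaklyAmenable_even_of_unitization_general A n h
end
end

section
/- Let (A,(p_l)) be a self-induced Fréchet algebra and let B be a Fréchet algebra containing A as a closed two-sided ideal. Then every continuous derivation D : A → A* extends to a continuous derivation D̃ : B → A* with D̃|_A = D. -/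
noncomputable section

open Filter Topology

section SubalgebraInstances

variable {A : Type} [NonUnitalRing A] [Module ℂ A] [SMulCommClass ℂ A A] [IsScalarTower ℂ A A]
  [TopologicalSpace A] [IsTopologicalAddGroup A] [ContinuousSMul ℂ A] [ContinuousMul A]

instance (I : NonUnitalSubalgebra ℂ A) : IsTopologicalAddGroup ↥I where
  continuous_add := by
    apply Continuous.subtype_mk
    exact (continuous_subtype_val.comp continuous_fst).add (continuous_subtype_val.comp continuous_snd)
  continuous_neg := by
    apply Continuous.subtype_mk
    exact continuous_subtype_val.neg

instance (I : NonUnitalSubalgebra ℂ A) : ContinuousMul ↥I where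
  continuous_mul := by
    apply Continuous.subtype_mk
    exact (continuous_subtype_val.comp continuous_fst).mul (continuous_subtype_val.comp continuous_snd)

end SubalgebraInstances

/-!
On products the extension is forced: expanding `D (b x) = D̃ (b x)` by the derivation rule gives
`D̃ b (x y) = ⟨D (b x), y⟩ - ⟨D x, y b⟩`. Because `D` is a derivation, the right-hand side is a
balanced bilinear form in `(x, y)`, so self-inducedness produces a functional `D̃ b ∈ A*`, unique
because `A` is essential; uniqueness makes `b ↦ D̃ b` linear, a derivation, and an extension of `D`.
For continuity, `b ↦ D̃ b z` is continuous when `z` is a sum of products, hence for every `z` as a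
pointwise limit of continuous functionals on the Fréchet space `B` (Banach–Steinhaus); a second use
of Banach–Steinhaus gives equicontinuity on bounded sets of `A`, i.e. continuity into the strong dual.
-/

section Essential

variable {A : Type} [NonUnitalRing A] [Module ℂ A] [TopologicalSpace A]

theorem IsEssential.ext {F : Type} [AddCommGroup F] [Module ℂ F] [TopologicalSpace F] [T2Space F]
    (hA : IsEssential A) {f g : A →L[ℂ] F} (h : ∀ x y : A, f (x * y) = g (x * y)) : f = g :=
  ContinuousLinearMap.ext_on hA (by rintro _ ⟨x, y, rfl⟩; exact h x y)

theorem IsContDerivation.apply_mul_apply [SMulCommClass ℂ A A] [IsScalarTower ℂ A A]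
    [ContinuousMul A] {D : A →L[ℂ] A →L[ℂ] ℂ}
    (hD : IsContDerivation A (selfBiMod A).dual D) (u v w : A) :
    D (u * v) w = D v (w * u) + D u (v * w) :=
  congrArg (fun f : A →L[ℂ] ℂ => f w) (hD u v)

end Essential

theorem FrechetSeminorms.firstCountableTopology {B : Type} [NonUnitalRing B] [Module ℂ B]
    [TopologicalSpace B] (hB : FrechetSeminorms B) :
    FirstCountableTopology B :=
  hB.choose_spec.1.firstCountableTopology

theorem FrechetSeminorms.barrelledSpace {B : Type} [NonUnitalRing B] [Module ℂ B]
    [UniformSpace B] [IsUniformAddGroup B] [ContinuousSMul ℂ B] [CompleteSpace B]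
    (hB : FrechetSeminorms B) :
    BarrelledSpace ℂ B :=
  have := hB.firstCountableTopology
  have := IsUniformAddGroup.uniformity_countably_generated (α := B)
  inferInstance

section BanachSteinhaus

variable {B E : Type} [AddCommGroup B] [Module ℂ B] [UniformSpace B] [IsUniformAddGroup B]
  [ContinuousSMul ℂ B] [BarrelledSpace ℂ B] [AddCommGroup E] [Module ℂ E] [TopologicalSpace E]

theorem LinearMap.continuous_apply_of_dense_span [FirstCountableTopology E]
    (T : B →ₗ[ℂ] E →L[ℂ] ℂ) {S : Set E} (hS : Dense (Submodule.span ℂ S : Set E))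
    (hT : ∀ z ∈ S, Continuous fun b => T b z) (z : E) : Continuous fun b => T b z := by
  let evalAt := (ContinuousLinearMap.coeLM ℂ ∘ₗ T).flip
  have h_span : ∀ z ∈ Submodule.span ℂ S, Continuous (evalAt z) := by
    intro z hz
    induction hz using Submodule.span_induction with
    | mem z hz => exact hT z hz
    | zero => rw [map_zero]; exact continuous_const
    | add z z' _ _ hz hz' => rw [map_add]; exact hz.add hz'
    | smul c z _ hz => rw [map_smul]; exact hz.const_smul c
  obtain ⟨u, hu_mem, hu_lim⟩ := mem_closure_iff_seq_limit.mp (hS z)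
  let g : ℕ → B →L[ℂ] ℂ := fun k => ⟨evalAt (u k), h_span _ (hu_mem k)⟩
  have hg : Tendsto (fun k b => g k b) atTop (𝓝 fun b => T b z) :=
    tendsto_pi_nhds.mpr fun b => ((T b).continuous.tendsto z).comp hu_lim
  exact (continuousLinearMapOfTendsto g hg).continuous

theorem LinearMap.continuous_of_continuous_apply (T : B →ₗ[ℂ] E →L[ℂ] ℂ)
    (hT : ∀ z, Continuous fun b => T b z) : Continuous T := by
  refine continuous_of_continuousAt_zero T ?_
  rw [ContinuousAt, map_zero, ContinuousLinearMap.hasBasis_nhds_zero.tendsto_right_iff]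
  rintro ⟨S, V⟩ ⟨hS, hV⟩
  let F : S → B →L[ℂ] ℂ := fun z => ⟨(ContinuousLinearMap.coeLM ℂ ∘ₗ T).flip z, hT z⟩
  have hF : UniformEquicontinuous ((↑) ∘ F) := PolynormableSpace.banach_steinhaus fun b =>
    (hS.image (T b)).subset (by rintro _ ⟨z, rfl⟩; exact ⟨z, z.2, rfl⟩)
  have hV' : {p : ℂ × ℂ | p.2 - p.1 ∈ V} ∈ uniformity ℂ := by
    rw [uniformity_eq_comap_nhds_zero ℂ]
    exact preimage_mem_comap hV
  filter_upwards [hF.equicontinuous 0 _ hV'] with b hb z hz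
  have h := hb ⟨z, hz⟩
  simp only [Function.comp_apply, map_zero, sub_zero] at h
  exact h

end BanachSteinhaus

section Extension

variable {B : Type} [NonUnitalRing B] [Module ℂ B] [SMulCommClass ℂ B B] [IsScalarTower ℂ B B]
  [TopologicalSpace B] [ContinuousMul B]
  {I : NonUnitalSubalgebra ℂ B}
  (hl : ∀ a : B, ∀ x ∈ I, a * x ∈ I) (hr : ∀ a : B, ∀ x ∈ I, x * a ∈ I)

-- The actions of `idealBiMod`, retyped as maps of `↥I` rather than of `(idealBiMod B I hl hr).X`,
-- so that their values can be multiplied in `↥I`.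
def idealMulLeft (b : B) : ↥I →L[ℂ] ↥I := (idealBiMod B I hl hr).l b

def idealMulRight (b : B) : ↥I →L[ℂ] ↥I := (idealBiMod B I hl hr).r b

def derivExtForm (D : ↥I →L[ℂ] ↥I →L[ℂ] ℂ) (b : B) : ↥I →L[ℂ] ↥I →L[ℂ] ℂ :=
  D ∘L idealMulLeft hl hr b - ContinuousLinearMap.precomp ℂ (idealMulRight hl hr b) ∘L D

theorem derivExtForm_apply (D : ↥I →L[ℂ] ↥I →L[ℂ] ℂ) (b : B) (x y : ↥I) :
    derivExtForm hl hr D b x y =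
      D (idealMulLeft hl hr b x) y - D x (idealMulRight hl hr b y) :=
  rfl

theorem derivExtForm_balanced {D : ↥I →L[ℂ] ↥I →L[ℂ] ℂ}
    (hD : IsContDerivation ↥I (selfBiMod ↥I).dual D) (b : B) (x c y : ↥I) :
    derivExtForm hl hr D b (x * c) y = derivExtForm hl hr D b x (c * y) := by
  have h1 : idealMulLeft hl hr b (x * c) = idealMulLeft hl hr b x * c :=
    Subtype.ext (mul_assoc _ _ _).symm
  have h2 : idealMulRight hl hr b y * x = y * idealMulLeft hl hr b x :=
    Subtype.ext (mul_assoc _ _ _)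
  have h3 : c * idealMulRight hl hr b y = idealMulRight hl hr b (c * y) :=
    Subtype.ext (mul_assoc _ _ _).symm
  rw [derivExtForm_apply, derivExtForm_apply, h1, hD.apply_mul_apply, hD.apply_mul_apply, ← h2, h3]
  ring

variable (hself : SelfInduced ↥I) {D : ↥I →L[ℂ] ↥I →L[ℂ] ℂ}
  (hD : IsContDerivation ↥I (selfBiMod ↥I).dual D)

def derivExt (b : B) : ↥I →L[ℂ] ℂ :=
  (hself.2 (ContinuousLinearMap.coeLM ℂ ∘ₗ (derivExtForm hl hr D b).toLinearMap)
    fun x y c => derivExtForm_balanced hl hr hD b x c y).choose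

theorem derivExt_apply_mul (b : B) (x y : ↥I) :
    derivExt hl hr hself hD b (x * y) =
      D (idealMulLeft hl hr b x) y - D x (idealMulRight hl hr b y) :=
  ((hself.2 _ fun x y c => derivExtForm_balanced hl hr hD b x c y).choose_spec x y).symm

def derivExtₗ : B →ₗ[ℂ] ↥I →L[ℂ] ℂ where
  toFun := derivExt hl hr hself hD
  map_add' b b' := hself.1.ext fun x y => by
    have hlx : idealMulLeft hl hr (b + b') x =
        idealMulLeft hl hr b x + idealMulLeft hl hr b' x := Subtype.ext (add_mul _ _ _)
    have hry : idealMulRight hl hr (b + b') y =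
        idealMulRight hl hr b y + idealMulRight hl hr b' y := Subtype.ext (mul_add _ _ _)
    simp only [add_apply, derivExt_apply_mul, hlx, hry, map_add]
    ring
  map_smul' c b := hself.1.ext fun x y => by
    have hlx : idealMulLeft hl hr (c • b) x = c • idealMulLeft hl hr b x :=
      Subtype.ext (smul_mul_assoc _ _ _)
    have hry : idealMulRight hl hr (c • b) y = c • idealMulRight hl hr b y :=
      Subtype.ext (mul_smul_comm _ _ _)
    simp only [smul_apply, derivExt_apply_mul, hlx, hry, map_smul,
      RingHom.id_apply, smul_eq_mul]
    ring

theorem continuous_derivExt_apply_mul [IsTopologicalAddGroup B] [ContinuousSMul ℂ B] (x y : ↥I) :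
    Continuous fun b => derivExt hl hr hself hD b (x * y) := by
  simp only [derivExt_apply_mul]
  have hlx : Continuous fun b => idealMulLeft hl hr b x :=
    (continuous_mul_const (x : B)).subtype_mk _
  have hry : Continuous fun b => idealMulRight hl hr b y :=
    (continuous_const_mul (y : B)).subtype_mk _
  exact ((continuous_eval_const y).comp (D.continuous.comp hlx)).sub ((D x).continuous.comp hry)

theorem derivExt_mul (a b : B) :
    derivExt hl hr hself hD (a * b) =
      (idealBiMod B I hl hr).dual.l a (derivExt hl hr hself hD b) +
        (idealBiMod B I hl hr).dual.r b (derivExt hl hr hself hD a) := by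
  refine hself.1.ext fun x y => ?_
  have hra : idealMulRight hl hr a (x * y) = x * idealMulRight hl hr a y :=
    Subtype.ext (mul_assoc _ _ _)
  have hlb : idealMulLeft hl hr b (x * y) = idealMulLeft hl hr b x * y :=
    Subtype.ext (mul_assoc _ _ _).symm
  have hrr : idealMulRight hl hr b (idealMulRight hl hr a y) =
      idealMulRight hl hr (a * b) y := Subtype.ext (mul_assoc _ _ _)
  have hll : idealMulLeft hl hr a (idealMulLeft hl hr b x) =
      idealMulLeft hl hr (a * b) x := Subtype.ext (mul_assoc _ _ _).symm
  calc derivExt hl hr hself hD (a * b) (x * y)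
      = derivExt hl hr hself hD b (x * idealMulRight hl hr a y) +
          derivExt hl hr hself hD a (idealMulLeft hl hr b x * y) := by
        rw [derivExt_apply_mul, derivExt_apply_mul, derivExt_apply_mul, hrr, hll]
        ring
    _ = _ := by rw [← hra, ← hlb]; rfl

theorem derivExt_coe (x : ↥I) : derivExt hl hr hself hD (x : B) = D x := by
  refine hself.1.ext fun u v => ?_
  have hxu : idealMulLeft hl hr x u = x * u := rfl
  have hvx : idealMulRight hl hr x v = v * x := rfl
  rw [derivExt_apply_mul, hxu, hvx, hD.apply_mul_apply]
  ring

end Extension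

theorem derivation_extension_of_selfInduced_general (B : Type) [NonUnitalRing B] [Module ℂ B] [SMulCommClass ℂ B B]
    [IsScalarTower ℂ B B] [UniformSpace B] [IsUniformAddGroup B] [ContinuousSMul ℂ B]
    [ContinuousMul B] [CompleteSpace B] (hA : FrechetSeminorms B)
    (I : NonUnitalSubalgebra ℂ B)
    (hl : ∀ a : B, ∀ x ∈ I, a * x ∈ I) (hr : ∀ a : B, ∀ x ∈ I, x * a ∈ I)
    (hself : SelfInduced ↥I) :
    ∀ D : ↥I →L[ℂ] ((selfBiMod ↥I).dual).X,
      IsContDerivation ↥I ((selfBiMod ↥I).dual) D →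
      ∃ Dt : B →L[ℂ] ((idealBiMod B I hl hr).dual).X,
        IsContDerivation B ((idealBiMod B I hl hr).dual) Dt ∧
        ∀ x : ↥I, Dt (x : B) = D x := by
  intro D hD
  have := hA.firstCountableTopology
  have : FirstCountableTopology ↥I := inferInstanceAs (FirstCountableTopology (I : Set B))
  have := hA.barrelledSpace
  let Dt := derivExtₗ hl hr hself hD
  have hDt : Continuous Dt := Dt.continuous_of_continuous_apply <|
    Dt.continuous_apply_of_dense_span hself.1 fun _ ⟨x, y, hxy⟩ =>
      hxy ▸ continuous_derivExt_apply_mul hl hr hself hD x y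
  exact ⟨⟨Dt, hDt⟩, derivExt_mul hl hr hself hD, derivExt_coe hl hr hself hD⟩

/-- Let `A` be a self-induced Fréchet algebra which is a closed two-sided ideal of a
Fréchet algebra `B`.  Then every continuous derivation `D : A → A*` extends to a
continuous derivation `D̃ : B → A*`. -/
theorem derivation_extension_of_selfInduced (B : Type) [NonUnitalRing B] [Module ℂ B] [SMulCommClass ℂ B B]
    [IsScalarTower ℂ B B] [UniformSpace B] [IsUniformAddGroup B] [ContinuousSMul ℂ B]
    [ContinuousMul B] [CompleteSpace B] [T2Space B] (hA : FrechetSeminorms B)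
    (I : NonUnitalSubalgebra ℂ B) (hc : IsClosed (I : Set B))
    (hl : ∀ a : B, ∀ x ∈ I, a * x ∈ I) (hr : ∀ a : B, ∀ x ∈ I, x * a ∈ I)
    (hself : SelfInduced ↥I) :
    ∀ D : ↥I →L[ℂ] ((selfBiMod ↥I).dual).X,
      IsContDerivation ↥I ((selfBiMod ↥I).dual) D →
      ∃ Dt : B →L[ℂ] ((idealBiMod B I hl hr).dual).X,
        IsContDerivation B ((idealBiMod B I hl hr).dual) Dt ∧
        ∀ x : ↥I, Dt (x : B) = D x :=
  derivation_extension_of_selfInduced_general B hA I hl hr hself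
end
end
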